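/- Let H be a traceless Hermitian operator on (ℂ²)^{⊗n} with k-local Pauli expansion as above, each qubit in at most ℓ terms. Then λ_min(H) ≤ −3^{−k/2} ‖Ĥ‖₁ / (4kℓ). -/

import Mathlib

noncomputable section
open Complex Matrix
open scoped Classical

/-- Pauli X matrix. -/
def σX : Matrix (Fin 2) (Fin 2) ℂ := !![0, 1; 1, 0]
/-- Pauli Y matrix. -/
def σY : Matrix (Fin 2) (Fin 2) ℂ := !![0, -I; I, 0]
/-- Pauli Z matrix. -/
def σZ : Matrix (Fin 2) (Fin 2) ℂ := !![1, 0; 0, -1]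

/-- The four Pauli matrices I, X, Y, Z. -/
def pauli : Fin 4 → Matrix (Fin 2) (Fin 2) ℂ := ![1, σX, σY, σZ]

/-- The n-qubit Pauli string s₁ ⊗ s₂ ⊗ ⋯ ⊗ sₙ, as a matrix indexed by Fin n → Fin 2. -/
def pauliString {n : ℕ} (s : Fin n → Fin 4) :
    Matrix (Fin n → Fin 2) (Fin n → Fin 2) ℂ :=
  fun v w => ∏ i, pauli (s i) (v i) (w i)

/-- The Hamiltonian H = Σ_s Ĥ_s s₁⊗⋯⊗sₙ with real Pauli coefficients Ĥ. -/
def hamOf {n : ℕ} (Hhat : (Fin n → Fin 4) → ℝ) :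
    Matrix (Fin n → Fin 2) (Fin n → Fin 2) ℂ :=
  ∑ s : Fin n → Fin 4, (Hhat s : ℂ) • pauliString s

/-- The weight |s| of a Pauli string: the number of non-identity tensor factors. -/
def weight {n : ℕ} (s : Fin n → Fin 4) : ℕ :=
  (Finset.univ.filter (fun i => s i ≠ 0)).card

/-- The product state ψ₁ ⊗ ⋯ ⊗ ψₙ. -/
def prodState {n : ℕ} (ψ : Fin n → Fin 2 → ℂ) : (Fin n → Fin 2) → ℂ :=
  fun v => ∏ i, ψ i (v i)

/-- Expectation value ⟨Ψ|M|Ψ⟩ for an n-qubit operator. -/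
def expValN {n : ℕ} (M : Matrix (Fin n → Fin 2) (Fin n → Fin 2) ℂ)
    (Ψ : (Fin n → Fin 2) → ℂ) : ℂ :=
  ∑ v, ∑ w, (starRingEnd ℂ) (Ψ v) * M v w * Ψ w

/-- The state |ψ₊₊⟩ = (√(3+√3)|0⟩ + e^{iπ/4}√(3-√3)|1⟩)/√6. -/
def ψpp : Fin 2 → ℂ :=
  ![(Real.sqrt (3 + Real.sqrt 3) : ℂ) / (Real.sqrt 6 : ℂ),
    Complex.exp (Real.pi * I / 4) * (Real.sqrt (3 - Real.sqrt 3) : ℂ) / (Real.sqrt 6 : ℂ)]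

/-- Pauli correction selecting a tetrahedron state: (+,+)↦I, (−,+)↦Z, (+,−)↦X, (−,−)↦Y. -/
def tetraM (a b : ℝ) : Matrix (Fin 2) (Fin 2) ℂ :=
  if a = 1 then (if b = 1 then 1 else σX) else (if b = 1 then σZ else σY)

/-- The tetrahedron state labelled by (a,b) ∈ {±1}². -/
def tetra (a b : ℝ) : Fin 2 → ℂ := (tetraM a b).mulVec ψpp


/-!
Label the tetrahedron states by the Pauli correction `q` carrying `ψpp` to them. In the product
state indexed by `c : Fin n → Fin 4`, a Pauli string `s` has expectation `χ_s(c) · 3^(-|s|/2)`,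
where `χ_s(c) = ±1` records whether `s` commutes with the correction string `c`; the `χ_s` are the
characters of `(ℤ₂ × ℤ₂)ⁿ`. Hence `⟨H⟩ = ∑ W_s χ_s(c)` with `W_s = Ĥ_s 3^(-|s|/2)`, and it suffices
to find `c` with `∑ W_s χ_s(c) ≤ W_0 - ∑_{s ≠ 0} |W_s| / (2kℓ)`.

Such a `c` is found greedily. Take `s₀ ≠ 0` with `|W_{s₀}|` maximal and average over the qubits in
the support of `s₀` with the nonnegative weight `1 - sign(W_{s₀}) χ_{s₀}`. The average is a
character sum in the remaining qubits whose constant term is smaller by `|W_{s₀}|`, and only the at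
most `kℓ` terms touching the support of `s₀`, each of size at most `|W_{s₀}|`, are lost or merged,
so the `ℓ¹`-mass drops by at most `2kℓ |W_{s₀}|`. Locality is inherited, and induction on the
number of qubits still carrying terms concludes.
-/

def commSign (p q : Fin 4) : ℝ := if p = 0 ∨ q = 0 ∨ p = q then 1 else -1

lemma commSign_zero_left (q : Fin 4) : commSign 0 q = 1 := if_pos (Or.inl rfl)

lemma commSign_xor_left (p q r : Fin 4) :
    commSign (p ^^^ q) r = commSign p r * commSign q r := by
  fin_cases p <;> fin_cases q <;> fin_cases r <;> norm_num [commSign] <;> decide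

lemma abs_commSign (p q : Fin 4) : |commSign p q| = 1 := by
  unfold commSign; split_ifs <;> norm_num

lemma sum_commSign (p : Fin 4) : ∑ q, commSign p q = if p = 0 then 4 else 0 := by
  fin_cases p <;> simp [commSign, Fin.sum_univ_four]

lemma sum_commSign_ite (p c : Fin 4) (b : Prop) [Decidable b] :
    ∑ q, commSign p (if b then q else c) = 4 * if b → p = 0 then commSign p c else 0 := by
  by_cases hb : b
  · by_cases hp : p = 0 <;> simp [hb, hp, sum_commSign, commSign_zero_left]
  · simp [hb]

lemma conjTranspose_pauli_mul_pauli_mul_pauli (p q : Fin 4) :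
    (pauli q)ᴴ * pauli p * pauli q = (commSign p q : ℂ) • pauli p := by
  fin_cases p <;> fin_cases q <;> ext i j <;> fin_cases i <;> fin_cases j <;>
    simp [pauli, σX, σY, σZ, commSign, Matrix.mul_apply, Fin.sum_univ_two]

lemma star_mulVec_dotProduct_mulVec_mulVec {m R : Type*} [Fintype m] [NonUnitalSemiring R]
    [StarRing R] (U M : Matrix m m R) (ψ : m → R) :
    star (U *ᵥ ψ) ⬝ᵥ M *ᵥ (U *ᵥ ψ) = star ψ ⬝ᵥ (Uᴴ * M * U) *ᵥ ψ := by
  rw [star_mulVec, ← dotProduct_mulVec, mulVec_mulVec, mulVec_mulVec, Matrix.mul_assoc]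

lemma exists_ψpp_eq : ∃ a b : ℝ, ψpp = ![(a : ℂ), b * (1 + I)] ∧
    a ^ 2 + 2 * b ^ 2 = 1 ∧ 2 * a * b = (√3)⁻¹ ∧ a ^ 2 - 2 * b ^ 2 = (√3)⁻¹ := by
  have h3 : √3 ^ 2 = 3 := Real.sq_sqrt (by norm_num)
  have h3lt : √3 < 3 := by nlinarith
  have h6 : √6 = √2 * √3 := by rw [← Real.sqrt_mul (by norm_num)]; norm_num
  have h6' : √6 = √(3 + √3) * √(3 - √3) := by
    rw [← Real.sqrt_mul (by positivity)]; congr 1; nlinarith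
  have hω : Complex.exp (Real.pi * I / 4) = ((√2 / 2 : ℝ) : ℂ) * (1 + I) := by
    rw [show (Real.pi * I / 4 : ℂ) = ((Real.pi / 4 : ℝ) : ℂ) * I by push_cast; ring,
      Complex.exp_mul_I, ← Complex.ofReal_cos, ← Complex.ofReal_sin, Real.cos_pi_div_four,
      Real.sin_pi_div_four]
    ring
  refine ⟨√(3 + √3) / √6, √(3 - √3) / (2 * √3), ?_, ?_, ?_, ?_⟩
  · ext i; fin_cases i
    · simp [ψpp]
    · simp only [ψpp, hω, h6]
      push_cast
      field_simp
  · rw [div_pow, div_pow, Real.sq_sqrt (by positivity), Real.sq_sqrt (by positivity),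
      Real.sq_sqrt (by linarith), mul_pow]
    field_simp
    linear_combination 2 * (√3 - 3) * h3
  · have : √(3 - √3) ≠ 0 := (Real.sqrt_pos.2 (by linarith)).ne'
    have : √(3 + √3) ≠ 0 := by positivity
    rw [h6']
    field_simp
  · rw [div_pow, div_pow, Real.sq_sqrt (by positivity), Real.sq_sqrt (by positivity),
      Real.sq_sqrt (by linarith), mul_pow, h3]
    field_simp
    linear_combination 12 * h3

lemma star_ψpp_dotProduct_pauli_mulVec (p : Fin 4) :
    star ψpp ⬝ᵥ pauli p *ᵥ ψpp = ((if p = 0 then 1 else (√3)⁻¹ : ℝ) : ℂ) := by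
  obtain ⟨a, b, hψ, hnorm, hXY, hZ⟩ := exists_ψpp_eq
  have hnorm' : (a : ℂ) ^ 2 + 2 * (b : ℂ) ^ 2 = 1 := by exact_mod_cast hnorm
  have hXY' : 2 * (a : ℂ) * b = (√3 : ℂ)⁻¹ := by exact_mod_cast hXY
  have hZ' : (a : ℂ) ^ 2 - 2 * (b : ℂ) ^ 2 = (√3 : ℂ)⁻¹ := by exact_mod_cast hZ
  rw [hψ]
  fin_cases p <;>
    simp only [dotProduct, Pi.star_apply, RCLike.star_def, mulVec, pauli, σX, σY, σZ,
      Fin.sum_univ_two, conj_ofReal, one_apply_eq, ne_eq, not_false_eq_true, one_apply_ne, map_mul,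
      map_add, map_one, conj_I, ↓reduceIte, ofReal_one, of_apply, ofReal_inv, Fin.reduceFinMk,
      cons_val, Fin.reduceEq]
  · linear_combination hnorm' - (b : ℂ) ^ 2 * I_sq
  · linear_combination hXY'
  · linear_combination hXY' - 2 * (a : ℂ) * b * I_sq
  · linear_combination hZ' + (b : ℂ) ^ 2 * I_sq

-- The states `tetra a b`, labelled by their Pauli correction instead of by `(a, b)`.
def tetraState (q : Fin 4) : Fin 2 → ℂ := pauli q *ᵥ ψpp

lemma star_tetraState_dotProduct_pauli_mulVec (p q : Fin 4) :
    star (tetraState q) ⬝ᵥ pauli p *ᵥ tetraState q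
      = ((commSign p q * if p = 0 then 1 else (√3)⁻¹ : ℝ) : ℂ) := by
  rw [tetraState, star_mulVec_dotProduct_mulVec_mulVec, conjTranspose_pauli_mul_pauli_mul_pauli,
    smul_mulVec, dotProduct_smul, star_ψpp_dotProduct_pauli_mulVec, smul_eq_mul, ofReal_mul]

lemma expValN_eq_dotProduct {n : ℕ} (M : Matrix (Fin n → Fin 2) (Fin n → Fin 2) ℂ)
    (Ψ : (Fin n → Fin 2) → ℂ) : expValN M Ψ = star Ψ ⬝ᵥ M *ᵥ Ψ := by
  simp only [expValN, dotProduct, mulVec, Finset.mul_sum, Pi.star_apply, RCLike.star_def, mul_assoc]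

lemma expValN_pauliString_prodState {n : ℕ} (s : Fin n → Fin 4) (ψ : Fin n → Fin 2 → ℂ) :
    expValN (pauliString s) (prodState ψ) = ∏ i, star (ψ i) ⬝ᵥ pauli (s i) *ᵥ ψ i := by
  simp only [expValN, prodState, pauliString, map_prod, ← Finset.prod_mul_distrib, dotProduct,
    mulVec, Finset.mul_sum, Fintype.prod_sum, Pi.star_apply, RCLike.star_def, mul_assoc]

lemma pauliString_zero {n : ℕ} : pauliString (0 : Fin n → Fin 4) = 1 := by
  ext v w
  simp [pauliString, pauli, one_apply, Finset.prod_boole, funext_iff]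

lemma expValN_hamOf {n : ℕ} (Hhat : (Fin n → Fin 4) → ℝ) (Ψ : (Fin n → Fin 2) → ℂ) :
    expValN (hamOf Hhat) Ψ = ∑ s, (Hhat s : ℂ) * expValN (pauliString s) Ψ := by
  simp only [expValN_eq_dotProduct, hamOf, sum_mulVec, dotProduct_sum, smul_mulVec,
    dotProduct_smul, smul_eq_mul]

section CharacterSums

open Finset

variable {ι : Type*}

-- On `Fin 4`, `^^^` is the product of Pauli matrices up to phase: `1 ^^^ 2 = 3` for `X Y ∝ Z`.
def pauliMul (s t : ι → Fin 4) : ι → Fin 4 := fun i => s i ^^^ t i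

lemma pauliMul_pauliMul_cancel (s t : ι → Fin 4) : pauliMul (pauliMul s t) t = s := by
  funext i
  simp [pauliMul, Fin.xor_assoc (show 4 = 2 ^ 2 by rfl)]

lemma pauliMul_apply_of_left_eq_zero {u : ι → Fin 4} {i : ι} (hu : u i = 0) (s : ι → Fin 4) :
    pauliMul u s i = s i := by
  rw [pauliMul, hu, Fin.xor_comm, Fin.xor_zero]

lemma pauliMul_apply_of_right_eq_zero (u : ι → Fin 4) {s : ι → Fin 4} {i : ι} (hs : s i = 0) :
    pauliMul u s i = u i := by
  rw [pauliMul, hs, Fin.xor_zero]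

variable [Fintype ι]

def pauliSupport (s : ι → Fin 4) : Finset ι := {i | s i ≠ 0}

def pauliChar (s c : ι → Fin 4) : ℝ := ∏ i, commSign (s i) (c i)

lemma pauliChar_zero_left (c : ι → Fin 4) : pauliChar 0 c = 1 := by
  simp [pauliChar, commSign_zero_left]

lemma abs_pauliChar (s c : ι → Fin 4) : |pauliChar s c| = 1 := by
  simp [pauliChar, abs_prod, abs_commSign]

lemma pauliChar_pauliMul (s t c : ι → Fin 4) :
    pauliChar (pauliMul s t) c = pauliChar s c * pauliChar t c := by
  simp [pauliChar, pauliMul, commSign_xor_left, prod_mul_distrib]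

variable [DecidableEq ι]

lemma pauliChar_piecewise_pauliSupport (s x c : ι → Fin 4) :
    pauliChar s ((pauliSupport s).piecewise x c) = pauliChar s x := by
  refine prod_congr rfl fun i _ => ?_
  by_cases hi : s i = 0
  · simp [hi, commSign_zero_left]
  · rw [piecewise_eq_of_mem _ _ _ (by simpa [pauliSupport] using hi)]

lemma sum_pauliChar_piecewise (S : Finset ι) (s c : ι → Fin 4) :
    ∑ x, pauliChar s (S.piecewise x c)
      = if ∀ i ∈ S, s i = 0 then 4 ^ Fintype.card ι * pauliChar s c else 0 := by
  change ∑ x : ι → Fin 4, ∏ i, commSign (s i) (if i ∈ S then x i else c i) = _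
  rw [← Fintype.prod_sum (fun i y => commSign (s i) (if i ∈ S then y else c i))]
  simp only [sum_commSign_ite, prod_mul_distrib, prod_const, card_univ, prod_ite_zero]
  simp [pauliChar]

def charSum (W : (ι → Fin 4) → ℝ) (c : ι → Fin 4) : ℝ := ∑ s, W s * pauliChar s c

-- The coefficients of the average of `charSum W` over the qubits in the support of `s₀`
-- with weight `1 + ε χ_{s₀}`, see `sum_mul_charSum_piecewise`.
def restrictCoeff (W : (ι → Fin 4) → ℝ) (s₀ : ι → Fin 4) (ε : ℝ) : (ι → Fin 4) → ℝ :=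
  fun u => if ∀ i ∈ pauliSupport s₀, u i = 0 then W u + ε * W (pauliMul u s₀) else 0

lemma sum_mul_charSum_piecewise (W : (ι → Fin 4) → ℝ) (s₀ : ι → Fin 4) (ε : ℝ) (c : ι → Fin 4) :
    ∑ x, (1 + ε * pauliChar s₀ x) * charSum W ((pauliSupport s₀).piecewise x c)
      = 4 ^ Fintype.card ι * charSum (restrictCoeff W s₀ ε) c := by
  set S := pauliSupport s₀
  have hmul : ∀ s x, pauliChar s₀ x * pauliChar s (S.piecewise x c)
      = pauliChar (pauliMul s s₀) (S.piecewise x c) := fun s x => by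
    rw [pauliChar_pauliMul, ← pauliChar_piecewise_pauliSupport s₀ x c, mul_comm]
  have hshift : ∑ s, W s * (if ∀ i ∈ S, pauliMul s s₀ i = 0
        then 4 ^ Fintype.card ι * pauliChar (pauliMul s s₀) c else 0)
      = ∑ u, W (pauliMul u s₀) * (if ∀ i ∈ S, u i = 0
        then 4 ^ Fintype.card ι * pauliChar u c else 0) := by
    refine Fintype.sum_equiv (Function.Involutive.toPerm (fun u => pauliMul u s₀)
      fun u => pauliMul_pauliMul_cancel u s₀) _ _ fun s => ?_
    change _ = W (pauliMul (pauliMul s s₀) s₀) * _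
    rw [pauliMul_pauliMul_cancel]
    rfl
  calc ∑ x, (1 + ε * pauliChar s₀ x) * charSum W (S.piecewise x c)
      = ∑ s, W s * (∑ x, pauliChar s (S.piecewise x c))
        + ε * ∑ s, W s * ∑ x, pauliChar (pauliMul s s₀) (S.piecewise x c) := by
        simp only [charSum, mul_sum, sum_add_distrib, add_mul, one_mul, ← hmul]
        rw [sum_comm, sum_comm (s := univ) (t := univ) (f := fun x s => _ * (_ * _))]
        congr 1
        exact sum_congr rfl fun _ _ => sum_congr rfl fun _ _ => by ring
    _ = 4 ^ Fintype.card ι * charSum (restrictCoeff W s₀ ε) c := by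
        simp only [sum_pauliChar_piecewise, hshift, charSum, restrictCoeff, mul_sum,
          ← sum_add_distrib]
        refine sum_congr rfl fun u _ => ?_
        split_ifs <;> ring

lemma sum_pauliChar_of_ne_zero {s : ι → Fin 4} (hs : s ≠ 0) : ∑ x, pauliChar s x = 0 := by
  have h := sum_pauliChar_piecewise univ s 0
  rw [if_neg (by simpa [funext_iff] using hs)] at h
  simpa using h

lemma exists_le_of_sum_mul_eq_sum_mul {α : Type*} [Fintype α] [Nonempty α] {w g : α → ℝ}
    {y : ℝ} (hw : ∀ x, 0 ≤ w x) (hpos : 0 < ∑ x, w x) (h : ∑ x, w x * g x = (∑ x, w x) * y) :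
    ∃ x, g x ≤ y := by
  obtain ⟨x₀, -, hx₀⟩ := univ.exists_min_image g univ_nonempty
  refine ⟨x₀, le_of_mul_le_mul_left ?_ hpos⟩
  calc (∑ x, w x) * g x₀ = ∑ x, w x * g x₀ := sum_mul ..
    _ ≤ ∑ x, w x * g x :=
        sum_le_sum fun x _ => mul_le_mul_of_nonneg_left (hx₀ x (mem_univ x)) (hw x)
    _ = (∑ x, w x) * y := h

lemma exists_charSum_piecewise_le (W : (ι → Fin 4) → ℝ) {s₀ : ι → Fin 4} (hs₀ : s₀ ≠ 0) {ε : ℝ}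
    (hε : |ε| ≤ 1) (c : ι → Fin 4) :
    ∃ x, charSum W ((pauliSupport s₀).piecewise x c) ≤ charSum (restrictCoeff W s₀ ε) c := by
  have hw : ∀ x, 0 ≤ 1 + ε * pauliChar s₀ x := fun x => by
    have := neg_abs_le (ε * pauliChar s₀ x)
    rw [abs_mul, abs_pauliChar, mul_one] at this
    linarith
  have hsum : ∑ x, (1 + ε * pauliChar s₀ x) = 4 ^ Fintype.card ι := by
    simp [sum_add_distrib, ← mul_sum, sum_pauliChar_of_ne_zero hs₀]
  exact exists_le_of_sum_mul_eq_sum_mul hw (by rw [hsum]; positivity)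
    (by rw [hsum, sum_mul_charSum_piecewise])

def IsLocal (k ℓ : ℕ) (W : (ι → Fin 4) → ℝ) : Prop :=
  (∀ s, W s ≠ 0 → #(pauliSupport s) ≤ k) ∧ ∀ i, #{s | W s ≠ 0 ∧ s i ≠ 0} ≤ ℓ

def liveSites (W : (ι → Fin 4) → ℝ) : Finset ι := {i | ∃ s, W s ≠ 0 ∧ s i ≠ 0}

def IsDominatedBy (V W : (ι → Fin 4) → ℝ) : Prop :=
  ∃ f : (ι → Fin 4) → ι → Fin 4, Set.InjOn f {u | V u ≠ 0} ∧
    ∀ u, V u ≠ 0 → W (f u) ≠ 0 ∧ pauliSupport u ⊆ pauliSupport (f u)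

lemma IsLocal.of_isDominatedBy {k ℓ : ℕ} {V W : (ι → Fin 4) → ℝ} (hW : IsLocal k ℓ W)
    (hVW : IsDominatedBy V W) : IsLocal k ℓ V := by
  obtain ⟨f, hinj, hf⟩ := hVW
  refine ⟨fun u hu => (card_le_card (hf u hu).2).trans (hW.1 _ (hf u hu).1), fun i => ?_⟩
  refine (card_le_card_of_injOn f (fun u hu => ?_) (hinj.mono fun u hu => ?_)).trans (hW.2 i)
  · simp only [coe_filter, mem_univ, true_and] at hu ⊢
    have hui : i ∈ pauliSupport u := by simpa [pauliSupport] using hu.2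
    exact ⟨(hf u hu.1).1, by simpa [pauliSupport] using (hf u hu.1).2 hui⟩
  · simp only [coe_filter, mem_univ, true_and, Set.mem_ofPred] at hu ⊢
    exact hu.1

lemma liveSites_subset_of_isDominatedBy {V W : (ι → Fin 4) → ℝ} (hVW : IsDominatedBy V W) :
    liveSites V ⊆ liveSites W := by
  obtain ⟨f, -, hf⟩ := hVW
  intro i hi
  simp only [liveSites, mem_filter, mem_univ, true_and] at hi ⊢
  obtain ⟨u, hu, hui⟩ := hi
  exact ⟨f u, (hf u hu).1, by simpa [pauliSupport] using (hf u hu).2 (by simpa [pauliSupport])⟩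

lemma restrictCoeff_ne_zero {W : (ι → Fin 4) → ℝ} {s₀ u : ι → Fin 4} {ε : ℝ}
    (h : restrictCoeff W s₀ ε u ≠ 0) :
    (∀ i ∈ pauliSupport s₀, u i = 0) ∧ (W u ≠ 0 ∨ W (pauliMul u s₀) ≠ 0) := by
  unfold restrictCoeff at h
  split_ifs at h with hu
  · refine ⟨hu, ?_⟩
    by_contra! h'
    simp [h'] at h
  · exact absurd rfl h

lemma restrictCoeff_zero (W : (ι → Fin 4) → ℝ) (s₀ : ι → Fin 4) (ε : ℝ) :
    restrictCoeff W s₀ ε 0 = W 0 + ε * W s₀ := by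
  have : pauliMul 0 s₀ = s₀ := funext fun i => pauliMul_apply_of_left_eq_zero (u := 0) rfl s₀
  simp [restrictCoeff, this]

lemma restrictCoeff_isDominatedBy (W : (ι → Fin 4) → ℝ) {s₀ : ι → Fin 4} (hs₀ : s₀ ≠ 0)
    (ε : ℝ) : IsDominatedBy (restrictCoeff W s₀ ε) W := by
  obtain ⟨i₀, hi₀⟩ : ∃ i, s₀ i ≠ 0 := by simpa [funext_iff] using hs₀
  have hi₀S : i₀ ∈ pauliSupport s₀ := by simpa [pauliSupport] using hi₀
  refine ⟨fun u => if W u ≠ 0 then u else pauliMul u s₀, ?_, fun u hu => ?_⟩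
  · intro u hu u' hu' h
    have hu₀ := (restrictCoeff_ne_zero hu).1 i₀ hi₀S
    have hu₀' := (restrictCoeff_ne_zero hu').1 i₀ hi₀S
    dsimp only at h
    split_ifs at h
    · exact h
    · have := congrFun h i₀
      rw [pauliMul_apply_of_left_eq_zero hu₀', hu₀] at this
      exact absurd this.symm hi₀
    · have := congrFun h i₀
      rw [pauliMul_apply_of_left_eq_zero hu₀, hu₀'] at this
      exact absurd this hi₀
    · rw [← pauliMul_pauliMul_cancel u s₀, h, pauliMul_pauliMul_cancel]
  · obtain ⟨hS, hW⟩ := restrictCoeff_ne_zero hu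
    dsimp only
    refine ⟨?_, fun i hi => ?_⟩
    · split_ifs with h
      · exact h
      · exact hW.resolve_left h
    · have hui : u i ≠ 0 := by simpa [pauliSupport] using hi
      have hs₀i : s₀ i = 0 := by
        by_contra h
        exact hui (hS i (by simpa [pauliSupport] using h))
      split_ifs
      · exact hi
      · simpa [pauliSupport, pauliMul_apply_of_right_eq_zero u hs₀i] using hui

lemma liveSites_restrictCoeff_ssubset {W : (ι → Fin 4) → ℝ} {s₀ : ι → Fin 4} (hs₀ : s₀ ≠ 0)
    (hW : W s₀ ≠ 0) (ε : ℝ) : liveSites (restrictCoeff W s₀ ε) ⊂ liveSites W := by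
  obtain ⟨i₀, hi₀⟩ : ∃ i, s₀ i ≠ 0 := by simpa [funext_iff] using hs₀
  refine ssubset_of_subset_of_ne (liveSites_subset_of_isDominatedBy
    (restrictCoeff_isDominatedBy W hs₀ ε)) fun h => ?_
  have : i₀ ∈ liveSites W := by
    simp only [liveSites, mem_filter, mem_univ, true_and]
    exact ⟨s₀, hW, hi₀⟩
  rw [← h] at this
  simp only [liveSites, mem_filter, mem_univ, true_and] at this
  obtain ⟨u, hu, hui⟩ := this
  exact hui ((restrictCoeff_ne_zero hu).1 i₀ (by simpa [pauliSupport] using hi₀))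

def mass (W : (ι → Fin 4) → ℝ) : ℝ := ∑ s ∈ univ.erase 0, |W s|

lemma sum_abs_pauliMul_le_sum_abs_touching (W : (ι → Fin 4) → ℝ) {s₀ : ι → Fin 4}
    (hs₀ : s₀ ≠ 0) :
    ∑ s with ∀ i ∈ pauliSupport s₀, s i = 0, |W (pauliMul s s₀)|
      ≤ ∑ s with ∃ i ∈ pauliSupport s₀, s i ≠ 0, |W s| := by
  set S := pauliSupport s₀
  obtain ⟨i₀, hi₀⟩ : ∃ i, s₀ i ≠ 0 := by simpa [funext_iff] using hs₀
  have hi₀S : i₀ ∈ S := by simpa [S, pauliSupport] using hi₀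
  rw [sum_filter, sum_filter]
  refine (Fintype.sum_equiv (Function.Involutive.toPerm (fun u => pauliMul u s₀)
    fun u => pauliMul_pauliMul_cancel u s₀) _ (fun t => if ∀ i ∈ S, pauliMul t s₀ i = 0
      then |W t| else 0) fun s => ?_).trans_le (sum_le_sum fun t _ => ?_)
  · change _ = if ∀ i ∈ S, pauliMul (pauliMul s s₀) s₀ i = 0 then |W (pauliMul s s₀)| else 0
    rw [pauliMul_pauliMul_cancel]
  · split_ifs with h h'
    · exact le_rfl
    · refine absurd ⟨i₀, hi₀S, fun ht => hi₀ ?_⟩ h'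
      rw [← pauliMul_apply_of_left_eq_zero ht s₀]
      exact h i₀ hi₀S
    · exact abs_nonneg _
    · exact le_rfl

lemma mass_le_mass_restrictCoeff_add (W : (ι → Fin 4) → ℝ) {s₀ : ι → Fin 4} (hs₀ : s₀ ≠ 0)
    {ε : ℝ} (hε : |ε| = 1) :
    mass W ≤ mass (restrictCoeff W s₀ ε)
      + 2 * ∑ s with ∃ i ∈ pauliSupport s₀, s i ≠ 0, |W s| := by
  set S := pauliSupport s₀
  have hsplit : ∀ s, (∀ i ∈ S, s i = 0) →
      |W s| ≤ |restrictCoeff W s₀ ε s| + |W (pauliMul s s₀)| := fun s hs => by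
    have : W s = restrictCoeff W s₀ ε s - ε * W (pauliMul s s₀) := by
      rw [restrictCoeff, if_pos hs]; ring
    rw [this]
    exact (abs_sub _ _).trans_eq (by rw [abs_mul, hε, one_mul])
  calc mass W = ∑ s ∈ univ.erase 0 with ∀ i ∈ S, s i = 0, |W s|
        + ∑ s ∈ univ.erase 0 with ¬∀ i ∈ S, s i = 0, |W s| :=
        (sum_filter_add_sum_filter_not _ _ _).symm
    _ ≤ (mass (restrictCoeff W s₀ ε) + ∑ s with ∃ i ∈ S, s i ≠ 0, |W s|)
        + ∑ s with ∃ i ∈ S, s i ≠ 0, |W s| := by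
        gcongr
        · calc ∑ s ∈ univ.erase 0 with ∀ i ∈ S, s i = 0, |W s|
              ≤ ∑ s ∈ univ.erase 0 with ∀ i ∈ S, s i = 0,
                  (|restrictCoeff W s₀ ε s| + |W (pauliMul s s₀)|) :=
                sum_le_sum fun s hs => hsplit s (mem_filter.1 hs).2
            _ ≤ mass (restrictCoeff W s₀ ε) + ∑ s with ∀ i ∈ S, s i = 0, |W (pauliMul s s₀)| := by
                rw [sum_add_distrib]
                gcongr
                · apply sum_le_sum_of_subset_of_nonneg (filter_subset _ _)
                  intros; positivity
                · exact subset_univ _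
            _ ≤ _ := add_le_add_right (sum_abs_pauliMul_le_sum_abs_touching W hs₀) _
        · intro s hs
          simp only [mem_filter, mem_univ, true_and] at hs ⊢
          simpa using hs.2
    _ = _ := by ring

lemma sum_abs_touching_le {k ℓ : ℕ} {W : (ι → Fin 4) → ℝ} (hW : IsLocal k ℓ W)
    {s₀ : ι → Fin 4} (hs₀ : W s₀ ≠ 0) (hmax : ∀ s ≠ 0, |W s| ≤ |W s₀|) :
    ∑ s with ∃ i ∈ pauliSupport s₀, s i ≠ 0, |W s| ≤ k * ℓ * |W s₀| := by
  have hsite : ∀ i, ∑ s with s i ≠ 0, |W s| ≤ ℓ * |W s₀| := fun i => by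
    rw [← sum_filter_ne_zero, filter_filter]
    refine (sum_le_card_nsmul _ _ _ fun s hs => hmax s ?_).trans ?_
    · exact fun h => (mem_filter.1 hs).2.1 (by simp [h])
    · rw [nsmul_eq_mul]
      gcongr
      exact_mod_cast (card_le_card fun s hs => by simp_all).trans (hW.2 i)
  calc ∑ s with ∃ i ∈ pauliSupport s₀, s i ≠ 0, |W s|
      ≤ ∑ s, ∑ i ∈ pauliSupport s₀, if s i ≠ 0 then |W s| else 0 := by
        rw [sum_filter]
        refine sum_le_sum fun s _ => ?_
        split_ifs with h
        · obtain ⟨i, hi, hsi⟩ := h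
          exact (if_pos hsi).symm.le.trans
            (single_le_sum (f := fun i => if s i ≠ 0 then |W s| else 0)
              (fun _ _ => by positivity) hi)
        · exact sum_nonneg fun _ _ => by positivity
    _ = ∑ i ∈ pauliSupport s₀, ∑ s with s i ≠ 0, |W s| := by
        rw [sum_comm]; simp only [sum_filter]
    _ ≤ ∑ i ∈ pauliSupport s₀, ℓ * |W s₀| := sum_le_sum fun i _ => hsite i
    _ ≤ k * ℓ * |W s₀| := by
        rw [sum_const, nsmul_eq_mul, ← mul_assoc]
        gcongr
        exact_mod_cast hW.1 s₀ hs₀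

lemma exists_restriction_step {k ℓ : ℕ} {W : (ι → Fin 4) → ℝ} (hW : IsLocal k ℓ W)
    {s₀ : ι → Fin 4} (hs₀ : s₀ ≠ 0) (hWs₀ : W s₀ ≠ 0) (hmax : ∀ s ≠ 0, |W s| ≤ |W s₀|) :
    ∃ V : (ι → Fin 4) → ℝ, IsLocal k ℓ V ∧ liveSites V ⊂ liveSites W ∧
      V 0 = W 0 - |W s₀| ∧ mass W ≤ mass V + 2 * k * ℓ * |W s₀| ∧
      ∀ c', ∃ c, charSum W c ≤ charSum V c' := by
  set ε : ℝ := -SignType.sign (W s₀)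
  have hε : |ε| = 1 := by
    rcases hWs₀.lt_or_gt with h | h <;> simp [ε, sign_neg, sign_pos, h]
  refine ⟨restrictCoeff W s₀ ε, hW.of_isDominatedBy (restrictCoeff_isDominatedBy W hs₀ ε),
    liveSites_restrictCoeff_ssubset hs₀ hWs₀ ε, ?_, ?_, fun c' => ?_⟩
  · rw [restrictCoeff_zero, neg_mul, sign_mul_self, sub_eq_add_neg]
  · linarith [mass_le_mass_restrictCoeff_add W hs₀ hε, sum_abs_touching_le hW hWs₀ hmax]
  · obtain ⟨x, hx⟩ := exists_charSum_piecewise_le W hs₀ hε.le c'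
    exact ⟨_, hx⟩

theorem exists_charSum_le_sub_mass_div {k ℓ : ℕ} {W : (ι → Fin 4) → ℝ} (hW : IsLocal k ℓ W) :
    ∃ c, charSum W c ≤ W 0 - mass W / (2 * k * ℓ) := by
  induction hN : #(liveSites W) using Nat.strong_induction_on generalizing W with
  | _ N ih =>
  by_cases hzero : ∀ s ≠ 0, W s = 0
  · refine ⟨0, ?_⟩
    have hsum : charSum W 0 = W 0 := by
      rw [charSum, sum_eq_single 0 (fun s _ hs => by simp [hzero s hs]) (by simp),
        pauliChar_zero_left, mul_one]
    have hmass : mass W = 0 := sum_eq_zero fun s hs => by simp [hzero s (ne_of_mem_erase hs)]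
    simp [hsum, hmass]
  obtain ⟨s₁, hs₁, hWs₁⟩ := not_forall₂.1 hzero
  obtain ⟨s₀, hs₀, hmax⟩ :=
    (univ.erase 0).exists_max_image (|W ·|) ⟨s₁, mem_erase.2 ⟨hs₁, mem_univ _⟩⟩
  have hs₀ : s₀ ≠ 0 := ne_of_mem_erase hs₀
  have hmax : ∀ s ≠ 0, |W s| ≤ |W s₀| := fun s hs => hmax s (mem_erase.2 ⟨hs, mem_univ _⟩)
  have hWs₀ : W s₀ ≠ 0 := abs_pos.1 ((abs_pos.2 hWs₁).trans_le (hmax s₁ hs₁))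
  obtain ⟨V, hV, hlive, hV0, hmass, hchar⟩ := exists_restriction_step hW hs₀ hWs₀ hmax
  obtain ⟨c', hc'⟩ := ih _ (hN ▸ card_lt_card hlive) hV rfl
  obtain ⟨c, hc⟩ := hchar c'
  refine ⟨c, hc.trans (hc'.trans ?_)⟩
  have : mass W / (2 * k * ℓ) ≤ mass V / (2 * k * ℓ) + |W s₀| := by
    calc mass W / (2 * k * ℓ) ≤ (mass V + 2 * k * ℓ * |W s₀|) / (2 * k * ℓ) := by gcongr
      _ ≤ mass V / (2 * k * ℓ) + |W s₀| := by
        rw [add_div]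
        gcongr
        exact div_le_of_le_mul₀ (by positivity) (abs_nonneg _) (by rw [mul_comm])
  linarith

lemma pow_mul_sum_abs_le_mass {a : ℝ} (ha₀ : 0 ≤ a) (ha₁ : a ≤ 1) {k : ℕ}
    {H : (ι → Fin 4) → ℝ} (h0 : H 0 = 0) (hdeg : ∀ s, H s ≠ 0 → #(pauliSupport s) ≤ k) :
    a ^ k * ∑ s, |H s| ≤ mass fun s => H s * a ^ #(pauliSupport s) := by
  rw [mass, ← sum_erase univ (f := fun s => |H s|) (a := 0) (by simp [h0]), mul_sum]
  refine sum_le_sum fun s _ => ?_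
  rw [abs_mul, abs_of_nonneg (pow_nonneg ha₀ _), mul_comm]
  by_cases hs : H s = 0
  · simp [hs]
  · exact mul_le_mul_of_nonneg_left (pow_le_pow_of_le_one ha₀ ha₁ (hdeg s hs)) (abs_nonneg _)

end CharacterSums

section Expectation

open Finset
open scoped MatrixOrder ComplexOrder

lemma iInf_eigenvalues_le_re_dotProduct_mulVec {m : Type*} [Fintype m] [DecidableEq m]
    [Nonempty m] {A : Matrix m m ℂ} (hA : A.IsHermitian) {Ψ : m → ℂ} (hΨ : star Ψ ⬝ᵥ Ψ = 1) :
    ⨅ i, hA.eigenvalues i ≤ (star Ψ ⬝ᵥ A *ᵥ Ψ).re := by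
  have hle : algebraMap ℝ (Matrix m m ℂ) (⨅ i, hA.eigenvalues i) ≤ A := by
    rw [algebraMap_le_iff_le_spectrum (a := A) hA.isSelfAdjoint,
      hA.spectrum_real_eq_range_eigenvalues]
    rintro _ ⟨i, rfl⟩
    exact ciInf_le (Finite.bddBelow_range _) i
  have h := (Matrix.le_iff.1 hle).dotProduct_mulVec_nonneg Ψ
  rw [sub_mulVec, dotProduct_sub, Algebra.algebraMap_eq_smul_one, smul_mulVec, one_mulVec,
    dotProduct_smul, hΨ] at h
  simpa only [real_smul, mul_one, sub_re, ofReal_re, sub_nonneg] using (Complex.nonneg_iff.1 h).1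

lemma prod_commSign_mul_ite {n : ℕ} (s c : Fin n → Fin 4) :
    ∏ i, (commSign (s i) (c i) * if s i = 0 then 1 else (√3)⁻¹)
      = pauliChar s c * (√3)⁻¹ ^ weight s := by
  rw [prod_mul_distrib, weight, ← prod_const, prod_filter]
  congr 1
  exact prod_congr rfl fun i _ => by split_ifs <;> simp_all

lemma expValN_hamOf_prodState_tetraState {n : ℕ} (Hhat : (Fin n → Fin 4) → ℝ)
    (c : Fin n → Fin 4) :
    expValN (hamOf Hhat) (prodState fun i => tetraState (c i))
      = charSum (fun s => Hhat s * (√3)⁻¹ ^ weight s) c := by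
  simp only [expValN_hamOf, expValN_pauliString_prodState,
    star_tetraState_dotProduct_pauli_mulVec, ← ofReal_prod, prod_commSign_mul_ite, charSum]
  push_cast
  exact sum_congr rfl fun s _ => by ring

lemma star_prodState_tetraState_dotProduct {n : ℕ} (c : Fin n → Fin 4) :
    star (prodState fun i => tetraState (c i)) ⬝ᵥ prodState (fun i => tetraState (c i)) = 1 := by
  have h := expValN_pauliString_prodState 0 (fun i => tetraState (c i))
  rw [pauliString_zero, expValN_eq_dotProduct, one_mulVec] at h
  simp only [h, Pi.zero_apply, star_tetraState_dotProduct_pauli_mulVec, commSign_zero_left]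
  simp

end Expectation

theorem stmt_16 (n k ℓ : ℕ) (Hhat : (Fin n → Fin 4) → ℝ)
    (hH : (hamOf Hhat).IsHermitian)
    (htr : Hhat (fun _ => 0) = 0)
    (hdeg : ∀ s, Hhat s ≠ 0 → weight s ≤ k)
    (hℓ : ∀ i : Fin n,
      (Finset.univ.filter (fun s : Fin n → Fin 4 => Hhat s ≠ 0 ∧ s i ≠ 0)).card ≤ ℓ) :
    (⨅ v, hH.eigenvalues v)
      ≤ -(((Real.sqrt 3)⁻¹) ^ k * (∑ s : Fin n → Fin 4, |Hhat s|) / (4 * k * ℓ)) := by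
  set W : (Fin n → Fin 4) → ℝ := fun s => Hhat s * (√3)⁻¹ ^ weight s
  have hW : IsLocal k ℓ W := IsLocal.of_isDominatedBy (W := Hhat) ⟨hdeg, hℓ⟩
    ⟨id, Set.injOn_id _, fun u hu => ⟨left_ne_zero_of_mul hu, subset_rfl⟩⟩
  have hW0 : W 0 = 0 := by
    change Hhat (fun _ => 0) * _ = 0
    rw [htr, zero_mul]
  have hmass : (√3)⁻¹ ^ k * ∑ s, |Hhat s| ≤ mass W :=
    pow_mul_sum_abs_le_mass (by positivity) (inv_le_one_of_one_le₀ (by simp)) htr hdeg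
  obtain ⟨c, hc⟩ := exists_charSum_le_sub_mass_div hW
  calc ⨅ v, hH.eigenvalues v ≤ charSum W c := by
        have := iInf_eigenvalues_le_re_dotProduct_mulVec hH (star_prodState_tetraState_dotProduct c)
        rwa [← expValN_eq_dotProduct, expValN_hamOf_prodState_tetraState, ofReal_re] at this
    _ ≤ -(mass W / (2 * k * ℓ)) := by linarith
    _ ≤ -((√3)⁻¹ ^ k * (∑ s, |Hhat s|) / (4 * k * ℓ)) := by
        rw [neg_le_neg_iff, show (4 * k * ℓ : ℝ) = 2 * (2 * k * ℓ) by ring, ← div_div]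
        gcongr
        linarith [show 0 ≤ (√3)⁻¹ ^ k * ∑ s, |Hhat s| by positivity]
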